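/- arXiv:quant-ph/0608063 — 2 statements merged into one kernel-verified Lean document; each statement's English description precedes it below -/
import Mathlib

section
/- Let v be a nonzero vector of F_4^n and, for 1 ≤ k ≤ n, let σ_k be the number of self-orthogonal additive codes over F_4 of length n and F_2-dimension k containing v. Then σ_k = ∏_{i=1}^{k-1} (2^{2(n−i)} − 1)/(2^i − 1). -/
abbrev F4 := GaloisField 2 2

/-- The trace inner product on F_4^n (its values lie in the subfield F_2). -/
noncomputable def trF {n : ℕ} (u v : Fin n → F4) : F4 :=
  ∑ i, (u i * v i ^ 2 + u i ^ 2 * v i)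

/-- An additive code (F_2-subspace of F_4^n) is self-orthogonal if it is
contained in its trace-dual. -/
def SelfOrth {n : ℕ} (C : Submodule (ZMod 2) (Fin n → F4)) : Prop :=
  ∀ u ∈ C, ∀ v ∈ C, trF u v = 0

/-!
The trace form is an alternating nondegenerate `F₂`-bilinear form on `F₄ⁿ ≅ F₂²ⁿ`, and the
self-orthogonal codes are its totally isotropic subspaces. Over any finite field `F_q`, double
counting the pairs `C ⊂ D` of totally isotropic subspaces through `v` of dimensions `j` and
`j + 1` gives `σ_{j+1} [j]_q = σ_j [2n - 2j]_q`, where `[m]_q = 1 + q + ⋯ + q^(m-1)`: the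
totally isotropic `D ⊃ C` are the lines of `C^⊥ / C`, and the `C ⊂ D` through `v` are the
hyperplanes of `D / ⟨v⟩`. Since `σ_1 = 1`, the product formula follows, and `[m]_2 = 2^m - 1`.
-/

open Module Finset

theorem Set.ncard_mul_eq_ncard_mul {α β : Type*} {s : Set α} {t : Set β} (r : α → β → Prop)
    {m n : ℕ} (hm : ∀ a ∈ s, {b ∈ t | r a b}.ncard = m) (hn : ∀ b ∈ t, {a ∈ s | r a b}.ncard = n)
    (hs : s.Finite := by toFinite_tac) (ht : t.Finite := by toFinite_tac) :
    s.ncard * m = t.ncard * n := by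
  classical
  rw [Set.ncard_eq_toFinset_card s hs, Set.ncard_eq_toFinset_card t ht]
  refine Finset.card_mul_eq_card_mul r (fun a ha => ?_) (fun b hb => ?_)
  · rw [← Set.ncard_coe_finset, coe_bipartiteAbove, ← hm a (by simpa using ha)]; simp
  · rw [← Set.ncard_coe_finset, coe_bipartiteBelow, ← hn b (by simpa using hb)]; simp

namespace Submodule

variable {K V : Type*} [Field K] [AddCommGroup V] [Module K V] [Finite V]

theorem ncard_coe (W : Submodule K V) : (W : Set V).ncard = Nat.card K ^ finrank K W := by
  rw [← Nat.card_coe_set_eq, SetLike.coe_sort_coe, Module.natCard_eq_pow_finrank (K := K)]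

theorem ncard_coe_sdiff {W U : Submodule K V} (h : W ≤ U) :
    ((U : Set V) \ W).ncard = Nat.card K ^ finrank K U - Nat.card K ^ finrank K W := by
  rw [Set.ncard_sdiff h, ncard_coe, ncard_coe]

theorem ncard_setOf_finrank_eq_finrank_add_one [Finite K] {W U : Submodule K V} (hWU : W ≤ U) :
    {E : Submodule K V | W ≤ E ∧ E ≤ U ∧ finrank K E = finrank K W + 1}.ncard =
      ∑ i ∈ range (finrank K U - finrank K W), Nat.card K ^ i := by
  set S := {E : Submodule K V | W ≤ E ∧ E ≤ U ∧ finrank K E = finrank K W + 1}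
  -- Double count `x ∈ E \ W`: each `x ∈ U \ W` lies in exactly one `E ∈ S`, namely `W ⊔ K x`.
  have hcover : ∀ x ∈ (U : Set V) \ W, {E ∈ S | x ∈ E} = {W ⊔ span K {x}} := by
    rintro x ⟨hxU, hxW⟩
    have hrank := finrank_sup_span_singleton (K := K) hxW
    ext E
    simp only [Set.mem_ofPred_eq, Set.mem_singleton_iff, S]
    constructor
    · rintro ⟨⟨hWE, -, hE⟩, hxE⟩
      exact (eq_of_le_of_finrank_eq (sup_le hWE ((span_singleton_le_iff_mem _ _).2 hxE))
        (by rw [hrank, hE])).symm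
    · rintro rfl
      exact ⟨⟨le_sup_left, sup_le hWU ((span_singleton_le_iff_mem _ _).2 hxU), hrank⟩,
        mem_sup_right (mem_span_singleton_self x)⟩
  have hpoints : ∀ E ∈ S, {x ∈ (U : Set V) \ W | x ∈ E} = (E : Set V) \ W := by
    rintro E ⟨-, hEU, -⟩
    ext x
    simp only [Set.mem_ofPred_eq, Set.mem_sdiff, SetLike.mem_coe]
    exact ⟨fun ⟨⟨_, hxW⟩, hxE⟩ => ⟨hxE, hxW⟩, fun ⟨hxE, hxW⟩ => ⟨⟨hEU hxE, hxW⟩, hxE⟩⟩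
  have hcount := Set.ncard_mul_eq_ncard_mul (s := (U : Set V) \ W) (t := S) (fun x E => x ∈ E)
    (fun x hx => by rw [hcover x hx, Set.ncard_singleton])
    (fun E hE => by rw [hpoints E hE, ncard_coe_sdiff hE.1, hE.2.2])
  obtain ⟨d, hd⟩ := Nat.exists_eq_add_of_le (finrank_mono (R := K) hWU)
  have hq : 1 < Nat.card K := Finite.one_lt_card
  rw [ncard_coe_sdiff hWU, mul_one, hd, pow_add, ← Nat.mul_sub_one, pow_succ, ← Nat.mul_sub_one,
    ← geom_sum_mul_of_one_le hq.le, mul_left_comm] at hcount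
  rw [hd, Nat.add_sub_cancel_left]
  exact Nat.eq_of_mul_eq_mul_right
    (Nat.mul_pos (Nat.pow_pos (by omega)) (Nat.sub_pos_of_lt hq)) hcount.symm

theorem ncard_setOf_finrank_add_one_eq_finrank [Finite K] {W U : Submodule K V} (hWU : W ≤ U) :
    {C : Submodule K V | W ≤ C ∧ C ≤ U ∧ finrank K C + 1 = finrank K U}.ncard =
      ∑ i ∈ range (finrank K U - finrank K W), Nat.card K ^ i := by
  -- `C ↦ C.dualAnnihilator` turns these hyperplanes into the lines between `U°` and `W°`.
  have := Module.finite_of_finite K (M := Dual K V)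
  have hdual (C : Submodule K V) := Subspace.finrank_add_finrank_dualAnnihilator_eq C
  have himage : dualAnnihilator ''
      {C : Submodule K V | W ≤ C ∧ C ≤ U ∧ finrank K C + 1 = finrank K U} =
      {E | U.dualAnnihilator ≤ E ∧ E ≤ W.dualAnnihilator ∧
        finrank K E = finrank K U.dualAnnihilator + 1} := by
    ext E
    constructor
    · rintro ⟨C, ⟨hWC, hCU, hC⟩, rfl⟩
      have := hdual C; have := hdual U
      exact ⟨dualAnnihilator_anti hCU, dualAnnihilator_anti hWC, by omega⟩
    · rintro ⟨hUE, hEW, hE⟩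
      have hCE := Subspace.dualCoannihilator_dualAnnihilator_eq (W := E)
      refine ⟨E.dualCoannihilator, ⟨?_, ?_, ?_⟩, hCE⟩
      · rwa [← Subspace.dualAnnihilator_le_dualAnnihilator_iff, hCE]
      · rwa [← Subspace.dualAnnihilator_le_dualAnnihilator_iff, hCE]
      · have := hdual E.dualCoannihilator; have := hdual U
        rw [hCE] at *
        omega
  have := hdual W; have := hdual U
  rw [← Set.ncard_image_of_injective _ fun _ _ => Subspace.dualAnnihilator_inj.1, himage,
    ncard_setOf_finrank_eq_finrank_add_one (dualAnnihilator_anti hWU)]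
  congr 2
  have := finrank_mono (R := K) hWU
  omega

end Submodule

namespace LinearMap.BilinForm

open Submodule

variable {K V : Type*} [Field K] [AddCommGroup V] [Module K V] {B : LinearMap.BilinForm K V}

theorem sup_span_singleton_le_orthogonal (hB : B.IsAlt) {C : Submodule K V}
    (hC : C ≤ B.orthogonal C) {x : V} (hx : x ∈ B.orthogonal C) :
    C ⊔ span K {x} ≤ B.orthogonal (C ⊔ span K {x}) := by
  intro y hy
  rw [mem_orthogonal_iff]
  intro z hz
  obtain ⟨c, hc, y', hy', rfl⟩ := mem_sup.1 hy
  obtain ⟨c', hc', z', hz', rfl⟩ := mem_sup.1 hz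
  obtain ⟨a, rfl⟩ := mem_span_singleton.1 hy'
  obtain ⟨b, rfl⟩ := mem_span_singleton.1 hz'
  have hxc : B x c = 0 := hB.isRefl _ _ (hx c hc)
  simp only [map_add, map_smul, LinearMap.add_apply, LinearMap.smul_apply, hC hc c' hc',
    hx c' hc', hxc, hB x, smul_zero, add_zero]

theorem le_orthogonal_self_iff [FiniteDimensional K V] {C D : Submodule K V} (hB : B.IsAlt)
    (hC : C ≤ B.orthogonal C) (hCD : C ≤ D) (hD : finrank K D = finrank K C + 1) :
    D ≤ B.orthogonal D ↔ D ≤ B.orthogonal C := by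
  refine ⟨fun h => h.trans (orthogonal_le hCD), fun h => ?_⟩
  obtain ⟨x, hxD, hxC⟩ := SetLike.exists_of_lt (hCD.lt_of_ne (by rintro rfl; omega))
  have hD' : C ⊔ span K {x} = D :=
    eq_of_le_of_finrank_eq (sup_le hCD ((span_singleton_le_iff_mem _ _).2 hxD))
      (by rw [finrank_sup_span_singleton hxC, hD])
  rw [← hD']
  exact sup_span_singleton_le_orthogonal hB hC (h hxD)

def totallyIsotropicThrough (B : LinearMap.BilinForm K V) (k : ℕ) (v : V) :
    Set (Submodule K V) :=
  {W | W ≤ B.orthogonal W ∧ finrank K W = k ∧ v ∈ W}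

theorem totallyIsotropicThrough_one [FiniteDimensional K V] (hB : B.IsAlt) {v : V}
    (hv : v ≠ 0) :
    B.totallyIsotropicThrough 1 v = {span K {v}} := by
  ext W
  simp only [totallyIsotropicThrough, Set.mem_ofPred_eq, Set.mem_singleton_iff]
  constructor
  · rintro ⟨-, hW, hvW⟩
    exact (eq_of_le_of_finrank_eq ((span_singleton_le_iff_mem _ _).2 hvW)
      (by rw [finrank_span_singleton hv, hW])).symm
  · rintro rfl
    refine ⟨?_, finrank_span_singleton hv, mem_span_singleton_self v⟩
    simpa using sup_span_singleton_le_orthogonal hB (C := ⊥) bot_le (x := v) (by simp)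

variable [Finite K] [Finite V]

theorem ncard_totallyIsotropicThrough_succ_mul (hB : B.IsAlt) (hBn : B.Nondegenerate) {v : V}
    (hv : v ≠ 0) (j : ℕ) :
    (B.totallyIsotropicThrough (j + 1) v).ncard * ∑ i ∈ Finset.range j, Nat.card K ^ i =
      (B.totallyIsotropicThrough j v).ncard *
        ∑ i ∈ Finset.range (finrank K V - 2 * j), Nat.card K ^ i := by
  have hextensions : ∀ C ∈ B.totallyIsotropicThrough j v,
      {D ∈ B.totallyIsotropicThrough (j + 1) v | C ≤ D} =
        {D | C ≤ D ∧ D ≤ B.orthogonal C ∧ finrank K D = finrank K C + 1} := by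
    rintro C ⟨hC, hCj, hvC⟩
    ext D
    simp only [totallyIsotropicThrough, Set.mem_ofPred_eq, hCj]
    constructor
    · rintro ⟨⟨hD, hDj, -⟩, hCD⟩
      exact ⟨hCD, (le_orthogonal_self_iff hB hC hCD (hDj.trans (by rw [hCj]))).1 hD, hDj⟩
    · rintro ⟨hCD, hDC, hDj⟩
      exact ⟨⟨(le_orthogonal_self_iff hB hC hCD (by rw [hDj, hCj])).2 hDC, hDj, hCD hvC⟩, hCD⟩
  have hhyperplanes : ∀ D ∈ B.totallyIsotropicThrough (j + 1) v,
      {C ∈ B.totallyIsotropicThrough j v | C ≤ D} =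
        {C | span K {v} ≤ C ∧ C ≤ D ∧ finrank K C + 1 = finrank K D} := by
    rintro D ⟨hD, hDj, -⟩
    ext C
    simp only [totallyIsotropicThrough, Set.mem_ofPred_eq, hDj, span_singleton_le_iff_mem]
    constructor
    · rintro ⟨⟨-, hCj, hvC⟩, hCD⟩
      exact ⟨hvC, hCD, by rw [hCj]⟩
    · rintro ⟨hvC, hCD, hCj⟩
      exact ⟨⟨hCD.trans (hD.trans (orthogonal_le hCD)), by omega, hvC⟩, hCD⟩
  symm
  refine Set.ncard_mul_eq_ncard_mul (· ≤ ·) (fun C hC => ?_) (fun D hD => ?_)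
  · rw [hextensions C hC, ncard_setOf_finrank_eq_finrank_add_one hC.1, finrank_orthogonal hBn,
      hC.2.1]
    congr 2
    omega
  · rw [hhyperplanes D hD, ncard_setOf_finrank_add_one_eq_finrank
      ((span_singleton_le_iff_mem _ _).2 hD.2.2), finrank_span_singleton hv, hD.2.1,
      Nat.add_sub_cancel]

theorem ncard_totallyIsotropicThrough_mul_prod (hB : B.IsAlt) (hBn : B.Nondegenerate) {v : V}
    (hv : v ≠ 0) (j : ℕ) :
    (B.totallyIsotropicThrough (j + 1) v).ncard *
        ∏ i ∈ Icc 1 j, ∑ l ∈ Finset.range i, Nat.card K ^ l =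
      ∏ i ∈ Icc 1 j, ∑ l ∈ Finset.range (finrank K V - 2 * i), Nat.card K ^ l := by
  induction j with
  | zero => simp [totallyIsotropicThrough_one hB hv]
  | succ j ih =>
    rw [prod_Icc_succ_top (by omega), prod_Icc_succ_top (by omega), ← mul_assoc, mul_right_comm,
      ncard_totallyIsotropicThrough_succ_mul hB hBn hv, mul_right_comm, ih]

end LinearMap.BilinForm

theorem F4.finrank : finrank (ZMod 2) F4 = 2 := GaloisField.finrank 2 two_ne_zero

theorem F4.pow_four (x : F4) : x ^ 4 = x := by
  have := Fintype.ofFinite F4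
  have := FiniteField.pow_card x
  rwa [Fintype.card_eq_nat_card, GaloisField.card 2 2 two_ne_zero] at this

theorem F4.algebraMap_trace (x : F4) :
    algebraMap (ZMod 2) F4 (Algebra.trace (ZMod 2) F4 x) = x + x ^ 2 := by
  rw [FiniteField.algebraMap_trace_eq_sum_pow, F4.finrank]
  simp [Finset.sum_range_succ]

/-- The `F₂`-valued form `Tr(∑ uᵢ vᵢ²)`; since `Tr x = x + x²`, its image in `F₄` is `trF u v`. -/
noncomputable def traceBilin (n : ℕ) : LinearMap.BilinForm (ZMod 2) (Fin n → F4) :=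
  ∑ i, (Algebra.traceForm (ZMod 2) F4).compl₁₂ (LinearMap.proj i)
    ((FiniteField.frobeniusAlgHom (ZMod 2) F4).toLinearMap ∘ₗ LinearMap.proj i)

variable {n : ℕ}

theorem traceBilin_apply (u v : Fin n → F4) :
    traceBilin n u v = Algebra.trace (ZMod 2) F4 (∑ i, u i * v i ^ 2) := by
  simp [traceBilin, Algebra.traceForm_apply, FiniteField.coe_frobeniusAlgHom]

theorem algebraMap_traceBilin (u v : Fin n → F4) :
    algebraMap (ZMod 2) F4 (traceBilin n u v) = trF u v := by
  rw [traceBilin_apply, F4.algebraMap_trace, trF, CharTwo.sum_sq, ← sum_add_distrib]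
  congr! 2 with i
  rw [mul_pow, ← pow_mul, F4.pow_four]

theorem traceBilin_eq_zero_iff {u v : Fin n → F4} : traceBilin n u v = 0 ↔ trF u v = 0 := by
  rw [← algebraMap_traceBilin, FaithfulSMul.algebraMap_eq_zero_iff]

theorem traceBilin_isAlt : (traceBilin n).IsAlt := fun u => by
  rw [traceBilin_eq_zero_iff, trF]
  refine sum_eq_zero fun i _ => ?_
  rw [mul_comm, CharTwo.add_self_eq_zero]

theorem traceBilin_nondegenerate : (traceBilin n).Nondegenerate := by
  refine .ofSeparatingLeft fun u hu => funext fun i => ?_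
  by_contra hi
  obtain ⟨z, hz⟩ : ∃ z, Algebra.traceForm (ZMod 2) F4 (u i) z ≠ 0 := by
    by_contra! h
    exact hi ((traceForm_nondegenerate (ZMod 2) F4).1 _ h)
  apply hz
  have := hu (Pi.single i (z ^ 2))
  rwa [traceBilin_apply, sum_eq_single i (fun j _ hj => by simp [hj]) (by simp),
    Pi.single_eq_same, ← pow_mul, F4.pow_four] at this

theorem selfOrth_iff_le_orthogonal {C : Submodule (ZMod 2) (Fin n → F4)} :
    SelfOrth C ↔ C ≤ (traceBilin n).orthogonal C := by
  simp only [SelfOrth, SetLike.le_def, LinearMap.BilinForm.mem_orthogonal_iff,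
    traceBilin_eq_zero_iff]
  exact forall₂_comm

theorem finrank_F4_pi : finrank (ZMod 2) (Fin n → F4) = 2 * n := by
  rw [finrank_pi_fintype, F4.finrank]
  simp [mul_comm]

theorem count_self_orthogonal_containing_general (n k : ℕ) (hk1 : 1 ≤ k)
    (v : Fin n → F4) (hv : v ≠ 0) :
    Nat.card {C : Submodule (ZMod 2) (Fin n → F4) //
        SelfOrth C ∧ Module.finrank (ZMod 2) C = k ∧ v ∈ C} *
      ∏ i ∈ Finset.Icc 1 (k - 1), (2 ^ i - 1) =
    ∏ i ∈ Finset.Icc 1 (k - 1), (2 ^ (2 * (n - i)) - 1) := by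
  obtain ⟨j, rfl⟩ := Nat.exists_eq_add_of_le' hk1
  have hcard : Nat.card {C : Submodule (ZMod 2) (Fin n → F4) //
      SelfOrth C ∧ finrank (ZMod 2) C = j + 1 ∧ v ∈ C} =
        ((traceBilin n).totallyIsotropicThrough (j + 1) v).ncard := by
    simp_rw [← Nat.card_coe_set_eq, LinearMap.BilinForm.totallyIsotropicThrough,
      selfOrth_iff_le_orthogonal]
    rfl
  have hgeom (d : ℕ) : ∑ i ∈ range d, 2 ^ i = 2 ^ d - 1 := by
    simpa using Nat.geomSum_eq le_rfl d
  have := (traceBilin n).ncard_totallyIsotropicThrough_mul_prod traceBilin_isAlt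
    traceBilin_nondegenerate hv j
  simp only [Nat.card_zmod, finrank_F4_pi, ← Nat.mul_sub, hgeom] at this
  rwa [hcard, Nat.add_sub_cancel]

/-- the number σ_k of self-orthogonal additive codes of length n
and F_2-dimension k containing a fixed nonzero vector v satisfies
σ_k = ∏_{i=1}^{k-1} (2^{2(n-i)} - 1)/(2^i - 1), stated in the cross-multiplied
(fraction-free) form. -/
theorem count_self_orthogonal_containing (n k : ℕ) (hk1 : 1 ≤ k) (hkn : k ≤ n)
    (v : Fin n → F4) (hv : v ≠ 0) :
    Nat.card {C : Submodule (ZMod 2) (Fin n → F4) //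
        SelfOrth C ∧ Module.finrank (ZMod 2) C = k ∧ v ∈ C} *
      ∏ i ∈ Finset.Icc 1 (k - 1), (2 ^ i - 1) =
    ∏ i ∈ Finset.Icc 1 (k - 1), (2 ^ (2 * (n - i)) - 1) :=
  count_self_orthogonal_containing_general n k hk1 v hv
end

section
/- Let C be a linear code over F_{2^m} that is self-orthogonal with respect to the standard inner product, and let B = {b_1,...,b_m} be a self-dual basis of F_{2^m} over F_2 (i.e., Tr(b_i b_j) = δ_ij). Then the binary expansion B(C) ⊆ F_2^{nm} of C is self-orthogonal with respect to the standard binary inner product. -/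
theorem LinearMap.BilinForm.apply_sum_smul_sum_smul_eq_dotProduct {R M ι : Type*}
    [CommSemiring R] [AddCommMonoid M] [Module R M] [Fintype ι] [DecidableEq ι]
    (B : LinearMap.BilinForm R M) (b : ι → M)
    (hb : ∀ i j, B (b i) (b j) = if i = j then 1 else 0) (a c : ι → R) :
    B (∑ i, a i • b i) (∑ j, c j • b j) = a ⬝ᵥ c := by
  simp [map_sum, hb, dotProduct, mul_comm]

theorem binary_expansion_self_orthogonal_general (m n : ℕ)
    (C : Submodule (GaloisField 2 m) (Fin n → GaloisField 2 m))
    (hC : ∀ u ∈ C, ∀ v ∈ C, ∑ i, u i * v i = 0)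
    (b : Fin m → GaloisField 2 m)
    (hb : ∀ i j, Algebra.trace (ZMod 2) (GaloisField 2 m) (b i * b j)
            = if i = j then 1 else 0) :
    ∀ u v : Fin n → Fin m → ZMod 2,
      (fun i => ∑ j, u i j • b j) ∈ C →
      (fun i => ∑ j, v i j • b j) ∈ C →
      ∑ i, ∑ j, u i j * v i j = 0 := by
  intro u v hu hv
  have trace_expansion_mul :=
    (Algebra.traceForm (ZMod 2) (GaloisField 2 m)).apply_sum_smul_sum_smul_eq_dotProduct b hb
  calc ∑ i, ∑ j, u i j * v i j
      = Algebra.trace (ZMod 2) (GaloisField 2 m)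
          (∑ i, (∑ j, u i j • b j) * ∑ j, v i j • b j) := by
        rw [map_sum]
        exact Finset.sum_congr rfl fun i _ => (trace_expansion_mul (u i) (v i)).symm
    _ = 0 := by rw [hC _ hu _ hv, map_zero]

/-- the binary expansion of a self-orthogonal linear code over
F_{2^m} with respect to a self-dual basis is self-orthogonal with respect to
the standard binary inner product. -/
theorem binary_expansion_self_orthogonal (m n : ℕ) (hm : 0 < m)
    (C : Submodule (GaloisField 2 m) (Fin n → GaloisField 2 m))
    (hC : ∀ u ∈ C, ∀ v ∈ C, ∑ i, u i * v i = 0)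
    (b : Fin m → GaloisField 2 m)
    (hbasis : LinearIndependent (ZMod 2) b)
    (hb : ∀ i j, Algebra.trace (ZMod 2) (GaloisField 2 m) (b i * b j)
            = if i = j then 1 else 0) :
    ∀ u v : Fin n → Fin m → ZMod 2,
      (fun i => ∑ j, u i j • b j) ∈ C →
      (fun i => ∑ j, v i j • b j) ∈ C →
      ∑ i, ∑ j, u i j * v i j = 0 :=
  binary_expansion_self_orthogonal_general m n C hC b hb
end
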